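/- arXiv:1511.08970 — 2 statements merged into one kernel-verified Lean document; each statement's English description precedes it below -/
import Mathlib

section
/- Assume ‖A‖₂ < 1. Then the IRLS iterates converge in functional value to the minimum: lim_{n→∞} F(x^n) = min_{x ∈ ℝ^N} F(x). -/
open Finset Filter Matrix Topology

/-!
Write `F_ε` (`Fsmooth`) for `F` with `|t|` replaced by `√(t² + ε²)`, so that `F = F_0`. For
`‖A‖₂ ≤ 1` an IRLS step from `xⁿ` is a majorize–minimize step for `F_{εₙ}`: the quadratic part is
majorized using `‖A(x − xⁿ)‖² ≤ ‖x − xⁿ‖²`, and the penalty by the tangent of the concave map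
`t ↦ t^{q/2}` at `(xⁿ_k)² + εₙ²`, whose slope is the weight `wⁿ_k`. As `ε` only decreases,
`Jₙ = F_{εₙ}(xⁿ)` satisfies `J_{n+1} + ‖x^{n+1} − xⁿ‖² ≤ Jₙ`. Hence the steps are square-summable,
`εₙ → 0`, and the iterates stay in a bounded sublevel set of `F`.

If `‖x^{n+1} − xⁿ‖ > εₙ²` held for all large `n`, the update rule would make `εₙ` eventually
constant, contradicting `εₙ → 0`. Along the indices with `‖x^{n+1} − xⁿ‖ ≤ εₙ²`, the gradient of
`F_{εₙ}` at `xⁿ`, which the iteration identifies with `−2(1 + λ q wⁿ)(x^{n+1} − xⁿ)`, is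
`O(‖x^{n+1} − xⁿ‖ + εₙ^q) → 0`. Passing to the limit in the convexity inequality
`F_{εₙ}(y) ≥ F_{εₙ}(xⁿ) + ⟨∇F_{εₙ}(xⁿ), y − xⁿ⟩` along a convergent subsequence shows that its
limit `x̄` minimizes `F`; then `F(x̄) ≤ F(xⁿ) ≤ Jₙ → F(x̄)`.
-/

/-- Squared Euclidean residual plus generalized sparsity penalty:
`F(x) = ‖Ax - b‖₂² + 2 ∑ₖ λₖ |xₖ|^{qₖ}`. -/
noncomputable def Ffun {M N : ℕ} (A : Matrix (Fin M) (Fin N) ℝ) (b : Fin M → ℝ)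
    (lam q : Fin N → ℝ) (x : Fin N → ℝ) : ℝ :=
  (∑ i, (A.mulVec x i - b i) ^ 2) + 2 * ∑ k, lam k * |x k| ^ (q k)

/-- The surrogate functional `G(x,a,w,ε)`. -/
noncomputable def Gfun {M N : ℕ} (A : Matrix (Fin M) (Fin N) ℝ) (b : Fin M → ℝ)
    (lam q : Fin N → ℝ) (x a w : Fin N → ℝ) (ε : ℝ) : ℝ :=
  (∑ i, (A.mulVec x i - b i) ^ 2) - (∑ i, (A.mulVec (x - a) i) ^ 2)
    + (∑ k, (x k - a k) ^ 2)
    + ∑ k ∈ Finset.univ.filter (fun k => 1 ≤ q k ∧ q k < 2),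
        lam k * (q k * w k * ((x k) ^ 2 + ε ^ 2)
          + (2 - q k) * (w k) ^ (q k / (q k - 2)))
    + ∑ k ∈ Finset.univ.filter (fun k => q k = 2),
        2 * lam k * ((x k) ^ 2 + ε ^ 2) * ((w k) ^ 2 - 2 * w k + 2)

/-- Euclidean (ℓ²) norm on `Fin N → ℝ`. -/
noncomputable def l2 {N : ℕ} (v : Fin N → ℝ) : ℝ :=
  Real.sqrt (∑ k, (v k) ^ 2)

/-- Spectral (ℓ² operator) norm of a matrix. -/
noncomputable def specNorm {M N : ℕ} (A : Matrix (Fin M) (Fin N) ℝ) : ℝ :=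
  ‖LinearMap.toContinuousLinearMap (Matrix.toEuclideanLin A)‖

lemma rpow_tangent_eq {p u a : ℝ} (ha : 0 < a) :
    a ^ p + p * a ^ (p - 1) * (u - a) = a ^ p * (1 + p * (u / a - 1)) := by
  rw [Real.rpow_sub_one ha.ne']
  field_simp

lemma add_mul_sub_le_rpow {p u a : ℝ} (ha : 0 < a) (hu : 0 ≤ u) (hp : 1 ≤ p) :
    a ^ p + p * a ^ (p - 1) * (u - a) ≤ u ^ p := by
  have h := one_add_mul_self_le_rpow_one_add (s := u / a - 1) (by linarith [div_nonneg hu ha.le]) hp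
  rw [add_sub_cancel, Real.div_rpow hu ha.le] at h
  calc a ^ p + p * a ^ (p - 1) * (u - a) ≤ a ^ p * (u ^ p / a ^ p) := by
        rw [rpow_tangent_eq ha]; gcongr
    _ = u ^ p := by field_simp

lemma rpow_le_add_mul_sub {p u a : ℝ} (ha : 0 < a) (hu : 0 ≤ u) (hp₀ : 0 ≤ p) (hp₁ : p ≤ 1) :
    u ^ p ≤ a ^ p + p * a ^ (p - 1) * (u - a) := by
  have h := rpow_one_add_le_one_add_mul_self (s := u / a - 1)
    (by linarith [div_nonneg hu ha.le]) hp₀ hp₁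
  rw [add_sub_cancel, Real.div_rpow hu ha.le] at h
  calc u ^ p = a ^ p * (u ^ p / a ^ p) := by field_simp
    _ ≤ a ^ p + p * a ^ (p - 1) * (u - a) := by
        rw [rpow_tangent_eq ha]; gcongr

lemma sq_add_sq_rpow_half_tangent_le {q a y ε : ℝ} (hq : 1 ≤ q) (hpos : 0 < a ^ 2 + ε ^ 2) :
    (a ^ 2 + ε ^ 2) ^ (q / 2) + q * (a ^ 2 + ε ^ 2) ^ ((q - 2) / 2) * a * (y - a)
      ≤ (y ^ 2 + ε ^ 2) ^ (q / 2) := by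
  rw [Real.rpow_div_two_eq_sqrt q hpos.le, Real.rpow_div_two_eq_sqrt (q - 2) hpos.le,
    Real.rpow_div_two_eq_sqrt q (by positivity)]
  set s := √(a ^ 2 + ε ^ 2)
  set u := √(y ^ 2 + ε ^ 2)
  have hs : 0 < s := Real.sqrt_pos.2 hpos
  have hs_sq : s ^ 2 = a ^ 2 + ε ^ 2 := Real.sq_sqrt hpos.le
  -- Cauchy–Schwarz for `(a, ε)` and `(y, ε)`
  have hcs : a * y + ε ^ 2 ≤ s * u := by
    rw [← Real.sqrt_mul hpos.le]
    exact (le_abs_self _).trans (Real.abs_le_sqrt (by nlinarith [sq_nonneg (ε * (a - y))]))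
  have hcross : q * s ^ (q - 2) * a * (y - a) ≤ q * s ^ (q - 1) * (u - s) := by
    rw [show q - 1 = q - 2 + 1 by ring, Real.rpow_add_one hs.ne']
    have : 0 ≤ q * s ^ (q - 2) := by positivity
    nlinarith
  linarith [add_mul_sub_le_rpow (u := u) hs (Real.sqrt_nonneg _) hq]

lemma abs_le_max_one_of_rpow_le {q t C : ℝ} (hq : 1 ≤ q) (h : |t| ^ q ≤ C) : |t| ≤ max 1 C := by
  rcases le_or_gt |t| 1 with ht | ht
  · exact ht.trans (le_max_left _ _)
  · calc |t| = |t| ^ (1 : ℝ) := (Real.rpow_one _).symm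
      _ ≤ |t| ^ q := Real.rpow_le_rpow_of_exponent_le ht.le hq
      _ ≤ max 1 C := h.trans (le_max_right _ _)

lemma summable_of_add_le {J d : ℕ → ℝ} (hJ : ∀ n, 0 ≤ J n) (hd : ∀ n, 0 ≤ d n)
    (h : ∀ n, J (n + 1) + d n ≤ J n) : Summable d := by
  have htel : ∀ n, ∑ i ∈ range n, d i + J n ≤ J 0 := fun n => by
    induction n with
    | zero => simp
    | succ n ih => rw [sum_range_succ]; linarith [h n]
  exact summable_of_sum_range_le hd fun n => by linarith [htel n, hJ n]

lemma frequently_lt_of_eq_min {ε t : ℕ → ℝ} (hpos : ∀ n, 0 < ε n)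
    (hlim : Tendsto ε atTop (𝓝 0)) (hrec : ∀ n, ε (n + 1) = min (ε n) (t n)) :
    ∃ᶠ n in atTop, t n < ε n := by
  by_contra hcon
  obtain ⟨n₀, hn₀⟩ := eventually_atTop.mp (not_frequently.mp hcon)
  have hconst : ∀ m, ε (m + n₀) = ε n₀ := fun m => by
    induction m with
    | zero => simp
    | succ m ih =>
      rw [add_right_comm, hrec, min_eq_left (not_lt.mp (hn₀ _ (by omega))), ih]
  have hlim' := (tendsto_add_atTop_iff_nat n₀).mpr hlim
  simp only [hconst, tendsto_const_nhds_iff] at hlim'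
  exact (hpos n₀).ne' hlim'

lemma Antitone.tendsto_of_tendsto_comp {u : ℕ → ℝ} (hu : Antitone u) {φ : ℕ → ℕ}
    (hφ : Tendsto φ atTop atTop) {L : ℝ} (hL : Tendsto (u ∘ φ) atTop (𝓝 L)) :
    Tendsto u atTop (𝓝 L) := by
  rcases tendsto_atTop_of_antitone hu with hbot | ⟨l, hl⟩
  · exact absurd hL (not_tendsto_nhds_of_tendsto_atBot (hbot.comp hφ) L)
  · rwa [tendsto_nhds_unique hL (hl.comp hφ)]

lemma l2_sq {N : ℕ} (v : Fin N → ℝ) : l2 v ^ 2 = ∑ k, v k ^ 2 :=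
  Real.sq_sqrt (sum_nonneg fun k _ => sq_nonneg (v k))

lemma abs_le_l2 {N : ℕ} (v : Fin N → ℝ) (k : Fin N) : |v k| ≤ l2 v :=
  Real.abs_le_sqrt (single_le_sum (f := fun k => v k ^ 2) (fun k _ => sq_nonneg (v k)) (mem_univ k))

section Residual

variable {m n : Type*} [Fintype m] [Fintype n]

lemma sum_sq_mulVec_sub_eq (A : Matrix m n ℝ) (b : m → ℝ) (x y : n → ℝ) :
    ∑ i, ((A *ᵥ y) i - b i) ^ 2 = ∑ i, (A *ᵥ (y - x)) i ^ 2
      + 2 * ∑ k, (y k - x k) * (Aᵀ *ᵥ (A *ᵥ x - b)) k + ∑ i, ((A *ᵥ x) i - b i) ^ 2 := by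
  have hcross : ∑ i, (A *ᵥ (y - x)) i * (A *ᵥ x - b) i
      = ∑ k, (y k - x k) * (Aᵀ *ᵥ (A *ᵥ x - b)) k := by
    change (A *ᵥ (y - x)) ⬝ᵥ (A *ᵥ x - b) = (y - x) ⬝ᵥ (Aᵀ *ᵥ (A *ᵥ x - b))
    rw [dotProduct_comm, dotProduct_mulVec, mulVec_transpose, dotProduct_comm]
  rw [← hcross, mul_sum, ← sum_add_distrib, ← sum_add_distrib]
  refine sum_congr rfl fun i _ => ?_
  simp only [mulVec_sub, Pi.sub_apply]
  ring

lemma sum_sq_residual_tangent_le (A : Matrix m n ℝ) (b : m → ℝ) (x y : n → ℝ) :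
    ∑ i, ((A *ᵥ x) i - b i) ^ 2 + 2 * ∑ k, (y k - x k) * (Aᵀ *ᵥ (A *ᵥ x - b)) k
      ≤ ∑ i, ((A *ᵥ y) i - b i) ^ 2 := by
  rw [sum_sq_mulVec_sub_eq A b x y]
  linarith [sum_nonneg fun i (_ : i ∈ univ) => sq_nonneg ((A *ᵥ (y - x)) i)]

end Residual

lemma sum_sq_mulVec_le_of_specNorm_le_one {M N : ℕ} {A : Matrix (Fin M) (Fin N) ℝ}
    (hA : specNorm A ≤ 1) (z : Fin N → ℝ) : ∑ i, (A *ᵥ z) i ^ 2 ≤ ∑ k, z k ^ 2 := by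
  set v : EuclideanSpace ℝ (Fin N) := WithLp.toLp 2 z
  have hle : ‖toEuclideanLin A v‖ ≤ ‖v‖ :=
    calc ‖toEuclideanLin A v‖ ≤ specNorm A * ‖v‖ :=
          (LinearMap.toContinuousLinearMap (toEuclideanLin A)).le_opNorm v
      _ ≤ ‖v‖ := mul_le_of_le_one_left (norm_nonneg v) hA
  have hsq := pow_le_pow_left₀ (norm_nonneg _) hle 2
  simpa [v, EuclideanSpace.norm_sq_eq] using hsq

noncomputable def Fsmooth {M N : ℕ} (A : Matrix (Fin M) (Fin N) ℝ) (b : Fin M → ℝ)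
    (lam q : Fin N → ℝ) (ε : ℝ) (x : Fin N → ℝ) : ℝ :=
  (∑ i, ((A *ᵥ x) i - b i) ^ 2) + 2 * ∑ k, lam k * (x k ^ 2 + ε ^ 2) ^ (q k / 2)

/-- Half the gradient of `Fsmooth A b lam q ε` at `x`. -/
noncomputable def gradFsmooth {M N : ℕ} (A : Matrix (Fin M) (Fin N) ℝ) (b : Fin M → ℝ)
    (lam q : Fin N → ℝ) (ε : ℝ) (x : Fin N → ℝ) (k : Fin N) : ℝ :=
  (Aᵀ *ᵥ (A *ᵥ x - b)) k + lam k * q k * (x k ^ 2 + ε ^ 2) ^ ((q k - 2) / 2) * x k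

section Objective

variable {M N : ℕ} {A : Matrix (Fin M) (Fin N) ℝ} {b : Fin M → ℝ} {lam q : Fin N → ℝ}

lemma abs_le_of_Ffun_le (hlam : ∀ k, 0 < lam k) (hq : ∀ k, 1 ≤ q k) {C : ℝ}
    {x : Fin N → ℝ} (hx : Ffun A b lam q x ≤ C) (k : Fin N) :
    |x k| ≤ max 1 (C / (2 * lam k)) := by
  refine abs_le_max_one_of_rpow_le (hq k) ?_
  rw [le_div_iff₀ (by linarith [hlam k])]
  have hterm : lam k * |x k| ^ q k ≤ ∑ l, lam l * |x l| ^ q l :=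
    single_le_sum (f := fun l => lam l * |x l| ^ q l)
      (fun l _ => mul_nonneg (hlam l).le (by positivity)) (mem_univ k)
  have hres : 0 ≤ ∑ i, ((A *ᵥ x) i - b i) ^ 2 := sum_nonneg fun i _ => sq_nonneg _
  unfold Ffun at hx
  linarith

lemma isBounded_setOf_Ffun_le (hlam : ∀ k, 0 < lam k) (hq : ∀ k, 1 ≤ q k) (C : ℝ) :
    Bornology.IsBounded {x | Ffun A b lam q x ≤ C} := by
  set B : Fin N → ℝ := fun k => max 1 (C / (2 * lam k))
  refine (Bornology.IsBounded.pi fun k => Metric.isBounded_Icc (-B k) (B k)).subset ?_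
  intro x hx
  simp only [Set.mem_univ_pi, Set.mem_Icc, ← abs_le]
  exact abs_le_of_Ffun_le hlam hq hx

lemma Fsmooth_zero : Fsmooth A b lam q 0 = Ffun A b lam q := by
  ext x
  simp only [Fsmooth, Ffun, ne_eq, OfNat.ofNat_ne_zero, not_false_eq_true, zero_pow, add_zero,
    Real.rpow_div_two_eq_sqrt _ (sq_nonneg _), Real.sqrt_sq_eq_abs]

lemma Fsmooth_le_Fsmooth (hlam : ∀ k, 0 ≤ lam k) (hq : ∀ k, 0 ≤ q k) {ε ε' : ℝ}
    (hε' : 0 ≤ ε') (hε : ε' ≤ ε) (x : Fin N → ℝ) :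
    Fsmooth A b lam q ε' x ≤ Fsmooth A b lam q ε x := by
  unfold Fsmooth
  gcongr with k
  · exact hlam k
  · linarith [hq k]

lemma Ffun_le_Fsmooth (hlam : ∀ k, 0 ≤ lam k) (hq : ∀ k, 0 ≤ q k) {ε : ℝ} (hε : 0 ≤ ε)
    (x : Fin N → ℝ) : Ffun A b lam q x ≤ Fsmooth A b lam q ε x :=
  Fsmooth_zero (A := A) (b := b) ▸ Fsmooth_le_Fsmooth hlam hq le_rfl hε x

lemma Fsmooth_nonneg (hlam : ∀ k, 0 ≤ lam k) (ε : ℝ) (x : Fin N → ℝ) :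
    0 ≤ Fsmooth A b lam q ε x := by
  unfold Fsmooth
  have hpen : 0 ≤ ∑ k, lam k * (x k ^ 2 + ε ^ 2) ^ (q k / 2) :=
    sum_nonneg fun k _ => mul_nonneg (hlam k) (by positivity)
  positivity

variable (A b lam) in
lemma tendsto_Fsmooth (hq : ∀ k, 0 ≤ q k) {ι : Type*} {l : Filter ι} {ε : ι → ℝ}
    {y : ι → Fin N → ℝ} {ybar : Fin N → ℝ} (hε : Tendsto ε l (𝓝 0)) (hy : Tendsto y l (𝓝 ybar)) :
    Tendsto (fun i => Fsmooth A b lam q (ε i) (y i)) l (𝓝 (Ffun A b lam q ybar)) := by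
  have hq2 : ∀ k, 0 ≤ q k / 2 := fun k => by linarith [hq k]
  have hcont : Continuous fun p : ℝ × (Fin N → ℝ) => Fsmooth A b lam q p.1 p.2 := by
    unfold Fsmooth
    fun_prop (disch := exact hq2 _)
  have h := (hcont.tendsto (0, ybar)).comp (hε.prodMk_nhds hy)
  rwa [Fsmooth_zero] at h

lemma Fsmooth_add_gradFsmooth_le (hlam : ∀ k, 0 ≤ lam k) (hq : ∀ k, 1 ≤ q k) {ε : ℝ}
    (hε : 0 < ε) (x y : Fin N → ℝ) :
    Fsmooth A b lam q ε x + 2 * ∑ k, gradFsmooth A b lam q ε x k * (y k - x k)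
      ≤ Fsmooth A b lam q ε y := by
  have hpen : ∀ k, lam k * (x k ^ 2 + ε ^ 2) ^ (q k / 2)
      + lam k * q k * (x k ^ 2 + ε ^ 2) ^ ((q k - 2) / 2) * x k * (y k - x k)
      ≤ lam k * (y k ^ 2 + ε ^ 2) ^ (q k / 2) := fun k => by
    have h := sq_add_sq_rpow_half_tangent_le (y := y k) (hq k) (by positivity : 0 < x k ^ 2 + ε ^ 2)
    nlinarith [mul_le_mul_of_nonneg_left h (hlam k)]
  have hres := sum_sq_residual_tangent_le A b x y
  have hsum := sum_le_sum fun k (_ : k ∈ univ) => hpen k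
  simp only [Fsmooth, gradFsmooth, add_mul, sum_add_distrib, mul_add] at hsum ⊢
  simp only [mul_comm (y _ - x _)] at hres
  linarith

lemma Fsmooth_add_sum_sq_sub_le (hA : ∀ z, ∑ i, (A *ᵥ z) i ^ 2 ≤ ∑ k, z k ^ 2)
    (hlam : ∀ k, 0 ≤ lam k) (hq : ∀ k, 1 ≤ q k ∧ q k ≤ 2) {ε : ℝ} (hε : 0 < ε)
    {a x : Fin N → ℝ}
    (hx : ∀ k, (1 + lam k * q k * (a k ^ 2 + ε ^ 2) ^ ((q k - 2) / 2)) * x k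
      = a k - (Aᵀ *ᵥ (A *ᵥ a - b)) k) :
    Fsmooth A b lam q ε x + ∑ k, (x k - a k) ^ 2 ≤ Fsmooth A b lam q ε a := by
  set c := Aᵀ *ᵥ (A *ᵥ a - b)
  have hcoord : ∀ k, 2 * (lam k * (x k ^ 2 + ε ^ 2) ^ (q k / 2)) + 2 * (x k - a k) ^ 2
      + 2 * (x k - a k) * c k ≤ 2 * (lam k * (a k ^ 2 + ε ^ 2) ^ (q k / 2)) := fun k => by
    set w := (a k ^ 2 + ε ^ 2) ^ ((q k - 2) / 2)
    have hw : 0 ≤ lam k * q k * w :=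
      mul_nonneg (mul_nonneg (hlam k) (by linarith [hq k])) (by positivity)
    -- tangent bound for the concave `t ↦ t ^ (q / 2)` at `a² + ε²`; its slope is the weight
    have hconc : (x k ^ 2 + ε ^ 2) ^ (q k / 2)
        ≤ (a k ^ 2 + ε ^ 2) ^ (q k / 2) + q k / 2 * w * (x k ^ 2 - a k ^ 2) := by
      have h := rpow_le_add_mul_sub (u := x k ^ 2 + ε ^ 2) (p := q k / 2)
        (by positivity : 0 < a k ^ 2 + ε ^ 2) (by positivity) (by linarith [hq k])
        (by linarith [hq k])
      rw [show q k / 2 - 1 = (q k - 2) / 2 by ring] at h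
      linarith
    have hc : c k = a k - (1 + lam k * q k * w) * x k := by linarith [hx k]
    rw [hc]
    nlinarith [mul_le_mul_of_nonneg_left hconc (hlam k), mul_nonneg hw (sq_nonneg (x k - a k))]
  have hres := sum_sq_mulVec_sub_eq A b a x
  have hAxa := hA (x - a)
  have hsum := sum_le_sum fun k (_ : k ∈ univ) => hcoord k
  simp only [Fsmooth, sum_add_distrib, ← mul_sum, Pi.sub_apply] at hsum hAxa ⊢
  simp only [mul_assoc, ← mul_sum] at hsum
  linarith

end Objective

structure IsIRLS {M N : ℕ} (A : Matrix (Fin M) (Fin N) ℝ) (b : Fin M → ℝ) (lam q : Fin N → ℝ)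
    (α : ℝ) (x : ℕ → Fin N → ℝ) (eps : ℕ → ℝ) (w : ℕ → Fin N → ℝ) : Prop where
  alpha_pos : 0 < α
  alpha_lt_one : α < 1
  eps_zero_pos : 0 < eps 0
  weight_eq : ∀ n k, w n k = (x n k ^ 2 + eps n ^ 2) ^ ((q k - 2) / 2)
  step_eq : ∀ n k, x (n + 1) k =
    (1 + lam k * q k * w n k)⁻¹ * (x n k + (Aᵀ *ᵥ b) k - (Aᵀ *ᵥ (A *ᵥ x n)) k)
  eps_succ : ∀ n, eps (n + 1) = min (eps n) (√(l2 (x (n + 1) - x n) + α ^ (n + 1)))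

namespace IsIRLS

variable {M N : ℕ} {A : Matrix (Fin M) (Fin N) ℝ} {b : Fin M → ℝ} {lam q : Fin N → ℝ} {α : ℝ}
  {x : ℕ → Fin N → ℝ} {eps : ℕ → ℝ} {w : ℕ → Fin N → ℝ}

lemma eps_pos (h : IsIRLS A b lam q α x eps w) (n : ℕ) : 0 < eps n := by
  induction n with
  | zero => exact h.eps_zero_pos
  | succ n ih =>
    rw [h.eps_succ]
    exact lt_min ih (Real.sqrt_pos.2 (add_pos_of_nonneg_of_pos (Real.sqrt_nonneg _)
      (pow_pos h.alpha_pos _)))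

lemma eps_succ_le (h : IsIRLS A b lam q α x eps w) (n : ℕ) : eps (n + 1) ≤ eps n :=
  h.eps_succ n ▸ min_le_left _ _

lemma weight_nonneg (h : IsIRLS A b lam q α x eps w) (n : ℕ) (k : Fin N) : 0 ≤ w n k :=
  h.weight_eq n k ▸ by positivity

lemma weight_le (h : IsIRLS A b lam q α x eps w) (hq : ∀ k, q k ≤ 2) (n : ℕ) (k : Fin N) :
    w n k ≤ eps n ^ (q k - 2) := by
  have hε := h.eps_pos n
  calc w n k = (x n k ^ 2 + eps n ^ 2) ^ ((q k - 2) / 2) := h.weight_eq n k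
    _ ≤ (eps n ^ 2) ^ ((q k - 2) / 2) :=
        Real.rpow_le_rpow_of_nonpos (by positivity) (by nlinarith) (by linarith [hq k])
    _ = eps n ^ (q k - 2) := by
        rw [Real.rpow_div_two_eq_sqrt _ (sq_nonneg _), Real.sqrt_sq hε.le]

lemma mul_step_eq (h : IsIRLS A b lam q α x eps w) (hlam : ∀ k, 0 ≤ lam k)
    (hq : ∀ k, 0 ≤ q k) (n : ℕ) (k : Fin N) :
    (1 + lam k * q k * w n k) * x (n + 1) k = x n k - (Aᵀ *ᵥ (A *ᵥ x n - b)) k := by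
  have hs : 0 ≤ lam k * q k * w n k := mul_nonneg (mul_nonneg (hlam k) (hq k)) (h.weight_nonneg n k)
  rw [h.step_eq, mulVec_sub, Pi.sub_apply, mul_inv_cancel_left₀ (by linarith)]
  ring

lemma Fsmooth_succ_add_l2_sq_le (h : IsIRLS A b lam q α x eps w) (hA : specNorm A ≤ 1)
    (hlam : ∀ k, 0 < lam k) (hq : ∀ k, 1 ≤ q k ∧ q k ≤ 2) (n : ℕ) :
    Fsmooth A b lam q (eps (n + 1)) (x (n + 1)) + l2 (x (n + 1) - x n) ^ 2
      ≤ Fsmooth A b lam q (eps n) (x n) := by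
  have hlam' : ∀ k, 0 ≤ lam k := fun k => (hlam k).le
  have hq' : ∀ k, 0 ≤ q k := fun k => by linarith [hq k]
  have hstep := Fsmooth_add_sum_sq_sub_le (b := b) (sum_sq_mulVec_le_of_specNorm_le_one hA)
    hlam' hq (h.eps_pos n) (fun k => h.weight_eq n k ▸ h.mul_step_eq hlam' hq' n k)
  have hmono := Fsmooth_le_Fsmooth (A := A) (b := b) hlam' hq'
    (h.eps_pos (n + 1)).le (h.eps_succ_le n) (x (n + 1))
  rw [l2_sq]
  simp only [Pi.sub_apply]
  linarith

lemma antitone_Fsmooth (h : IsIRLS A b lam q α x eps w) (hA : specNorm A ≤ 1)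
    (hlam : ∀ k, 0 < lam k) (hq : ∀ k, 1 ≤ q k ∧ q k ≤ 2) :
    Antitone fun n => Fsmooth A b lam q (eps n) (x n) :=
  antitone_nat_of_succ_le fun n => by nlinarith [h.Fsmooth_succ_add_l2_sq_le hA hlam hq n]

lemma tendsto_l2_step (h : IsIRLS A b lam q α x eps w) (hA : specNorm A ≤ 1)
    (hlam : ∀ k, 0 < lam k) (hq : ∀ k, 1 ≤ q k ∧ q k ≤ 2) :
    Tendsto (fun n => l2 (x (n + 1) - x n)) atTop (𝓝 0) := by
  have hsum : Summable fun n => l2 (x (n + 1) - x n) ^ 2 :=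
    summable_of_add_le (fun n => Fsmooth_nonneg (fun k => (hlam k).le) _ _)
      (fun n => sq_nonneg _) (h.Fsmooth_succ_add_l2_sq_le hA hlam hq)
  have hsqrt := (Real.continuous_sqrt.tendsto 0).comp hsum.tendsto_atTop_zero
  simpa [Function.comp_def, Real.sqrt_sq (Real.sqrt_nonneg _), l2] using hsqrt

lemma tendsto_eps (h : IsIRLS A b lam q α x eps w) (hA : specNorm A ≤ 1)
    (hlam : ∀ k, 0 < lam k) (hq : ∀ k, 1 ≤ q k ∧ q k ≤ 2) :
    Tendsto eps atTop (𝓝 0) := by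
  have hα : Tendsto (fun n : ℕ => α ^ (n + 1)) atTop (𝓝 0) :=
    (tendsto_pow_atTop_nhds_zero_of_lt_one h.alpha_pos.le h.alpha_lt_one).comp
      (tendsto_add_atTop_nat 1)
  have hbound := (Real.continuous_sqrt.tendsto 0).comp
    (by simpa using (h.tendsto_l2_step hA hlam hq).add hα)
  rw [Real.sqrt_zero] at hbound
  refine (tendsto_add_atTop_iff_nat 1).mp (tendsto_of_tendsto_of_tendsto_of_le_of_le
    tendsto_const_nhds hbound (fun n => (h.eps_pos (n + 1)).le) fun n => ?_)
  rw [h.eps_succ]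
  exact min_le_right _ _

lemma frequently_l2_step_le (h : IsIRLS A b lam q α x eps w) (hA : specNorm A ≤ 1)
    (hlam : ∀ k, 0 < lam k) (hq : ∀ k, 1 ≤ q k ∧ q k ≤ 2) :
    ∃ᶠ n in atTop, l2 (x (n + 1) - x n) ≤ eps n ^ 2 := by
  refine (frequently_lt_of_eq_min h.eps_pos (h.tendsto_eps hA hlam hq) h.eps_succ).mono
    fun n hn => ?_
  rw [Real.sqrt_lt' (h.eps_pos n)] at hn
  linarith [pow_pos h.alpha_pos (n + 1)]

lemma isBounded_range (h : IsIRLS A b lam q α x eps w) (hA : specNorm A ≤ 1)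
    (hlam : ∀ k, 0 < lam k) (hq : ∀ k, 1 ≤ q k ∧ q k ≤ 2) :
    Bornology.IsBounded (Set.range x) := by
  refine (isBounded_setOf_Ffun_le (A := A) (b := b) hlam (fun k => (hq k).1)
    (Fsmooth A b lam q (eps 0) (x 0))).subset ?_
  rintro _ ⟨n, rfl⟩
  exact (Ffun_le_Fsmooth (fun k => (hlam k).le) (fun k => by linarith [hq k])
    (h.eps_pos n).le _).trans (h.antitone_Fsmooth hA hlam hq (Nat.zero_le n))

lemma exists_tendsto_subseq (h : IsIRLS A b lam q α x eps w) (hA : specNorm A ≤ 1)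
    (hlam : ∀ k, 0 < lam k) (hq : ∀ k, 1 ≤ q k ∧ q k ≤ 2) :
    ∃ (xbar : Fin N → ℝ) (φ : ℕ → ℕ), StrictMono φ ∧ Tendsto (x ∘ φ) atTop (𝓝 xbar) ∧
      ∀ j, l2 (x (φ j + 1) - x (φ j)) ≤ eps (φ j) ^ 2 := by
  obtain ⟨φ, hφ, hgood⟩ := extraction_of_frequently_atTop (h.frequently_l2_step_le hA hlam hq)
  obtain ⟨xbar, -, ψ, hψ, hlim⟩ :=
    tendsto_subseq_of_bounded (h.isBounded_range hA hlam hq) fun j => Set.mem_range_self (φ j)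
  exact ⟨xbar, φ ∘ ψ, hφ.comp hψ, hlim, fun j => hgood (ψ j)⟩

lemma gradFsmooth_eq (h : IsIRLS A b lam q α x eps w) (hlam : ∀ k, 0 ≤ lam k)
    (hq : ∀ k, 0 ≤ q k) (n : ℕ) (k : Fin N) :
    gradFsmooth A b lam q (eps n) (x n) k
      = -((1 + lam k * q k * w n k) * (x (n + 1) k - x n k)) := by
  rw [gradFsmooth, ← h.weight_eq]
  linear_combination h.mul_step_eq hlam hq n k

lemma abs_gradFsmooth_le (h : IsIRLS A b lam q α x eps w) (hlam : ∀ k, 0 < lam k)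
    (hq : ∀ k, 1 ≤ q k ∧ q k ≤ 2) {n : ℕ} (hn : l2 (x (n + 1) - x n) ≤ eps n ^ 2) (k : Fin N) :
    |gradFsmooth A b lam q (eps n) (x n) k| ≤ l2 (x (n + 1) - x n) + lam k * q k * eps n ^ q k := by
  have hε := h.eps_pos n
  have hΔ : |x (n + 1) k - x n k| ≤ l2 (x (n + 1) - x n) := abs_le_l2 (x (n + 1) - x n) k
  have hw : w n k * |x (n + 1) k - x n k| ≤ eps n ^ q k :=
    calc w n k * |x (n + 1) k - x n k| ≤ eps n ^ (q k - 2) * eps n ^ (2 : ℝ) := by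
          rw [Real.rpow_two]
          exact mul_le_mul (h.weight_le (fun k => (hq k).2) n k) (hΔ.trans hn) (abs_nonneg _)
            (by positivity)
      _ = eps n ^ q k := by rw [← Real.rpow_add hε, sub_add_cancel]
  have hs : 0 ≤ lam k * q k := mul_nonneg (hlam k).le (by linarith [hq k])
  rw [h.gradFsmooth_eq (fun k => (hlam k).le) (fun k => by linarith [hq k]), abs_neg, abs_mul,
    abs_of_nonneg (by nlinarith [h.weight_nonneg n k])]
  nlinarith [mul_le_mul_of_nonneg_left hw hs]

lemma tendsto_gradFsmooth (h : IsIRLS A b lam q α x eps w) (hA : specNorm A ≤ 1)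
    (hlam : ∀ k, 0 < lam k) (hq : ∀ k, 1 ≤ q k ∧ q k ≤ 2) {φ : ℕ → ℕ}
    (hφ : Tendsto φ atTop atTop) (hgood : ∀ j, l2 (x (φ j + 1) - x (φ j)) ≤ eps (φ j) ^ 2)
    (k : Fin N) :
    Tendsto (fun j => gradFsmooth A b lam q (eps (φ j)) (x (φ j)) k) atTop (𝓝 0) := by
  have hq0 : 0 < q k := by linarith [hq k]
  have hpow := ((Real.continuous_rpow_const hq0.le).tendsto 0).comp
    ((h.tendsto_eps hA hlam hq).comp hφ)
  rw [Real.zero_rpow hq0.ne'] at hpow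
  have hbound := ((h.tendsto_l2_step hA hlam hq).comp hφ).add (hpow.const_mul (lam k * q k))
  rw [mul_zero, add_zero] at hbound
  exact squeeze_zero_norm (fun j => h.abs_gradFsmooth_le hlam hq (hgood j) k) hbound

lemma Ffun_le_of_tendsto_subseq (h : IsIRLS A b lam q α x eps w) (hA : specNorm A ≤ 1)
    (hlam : ∀ k, 0 < lam k) (hq : ∀ k, 1 ≤ q k ∧ q k ≤ 2) {xbar : Fin N → ℝ} {φ : ℕ → ℕ}
    (hφ : Tendsto φ atTop atTop) (hlim : Tendsto (x ∘ φ) atTop (𝓝 xbar))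
    (hgood : ∀ j, l2 (x (φ j + 1) - x (φ j)) ≤ eps (φ j) ^ 2) (y : Fin N → ℝ) :
    Ffun A b lam q xbar ≤ Ffun A b lam q y := by
  have hq0 : ∀ k, 0 ≤ q k := fun k => by linarith [hq k]
  have hε := (h.tendsto_eps hA hlam hq).comp hφ
  have hgrad := tendsto_finsetSum univ fun k _ =>
    (h.tendsto_gradFsmooth hA hlam hq hφ hgood k).mul
      ((tendsto_pi_nhds.1 hlim k).const_sub (y k))
  have hlhs := (tendsto_Fsmooth A b lam hq0 hε hlim).add (hgrad.const_mul 2)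
  simp only [zero_mul, sum_const_zero, mul_zero, add_zero] at hlhs
  exact le_of_tendsto_of_tendsto' hlhs (tendsto_Fsmooth A b lam hq0 hε tendsto_const_nhds) fun j =>
    Fsmooth_add_gradFsmooth_le (fun k => (hlam k).le) (fun k => (hq k).1) (h.eps_pos _) _ y

end IsIRLS

/-- if `‖A‖₂ < 1`, the IRLS iterates converge in functional value
to the minimum of `F`: `F(xⁿ) → min F`. -/
theorem stmt_15 {M N : ℕ} (A : Matrix (Fin M) (Fin N) ℝ) (hA : specNorm A < 1)
    (b : Fin M → ℝ) (lam q : Fin N → ℝ)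
    (hlam : ∀ k, 0 < lam k) (hq : ∀ k, 1 ≤ q k ∧ q k ≤ 2)
    (x : ℕ → Fin N → ℝ) (eps : ℕ → ℝ) (w : ℕ → Fin N → ℝ)
    (α : ℝ) (hα0 : 0 < α) (hα1 : α < 1) (heps0 : 0 < eps 0)
    (hw : ∀ n k, w n k = ((x n k) ^ 2 + (eps n) ^ 2) ^ ((q k - 2) / 2))
    (hxiter : ∀ n k, x (n + 1) k =
      (1 + lam k * q k * w n k)⁻¹
        * (x n k + Aᵀ.mulVec b k - Aᵀ.mulVec (A.mulVec (x n)) k))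
    (hepsiter : ∀ n, eps (n + 1) =
      min (eps n) (Real.sqrt (l2 (x (n + 1) - x n) + α ^ (n + 1)))) :
    ∃ xbar : Fin N → ℝ,
      (∀ y : Fin N → ℝ, Ffun A b lam q xbar ≤ Ffun A b lam q y) ∧
      Tendsto (fun n => Ffun A b lam q (x n)) atTop
        (nhds (Ffun A b lam q xbar)) := by
  have h : IsIRLS A b lam q α x eps w := ⟨hα0, hα1, heps0, hw, hxiter, hepsiter⟩
  obtain ⟨xbar, φ, hφ, hlim, hgood⟩ := h.exists_tendsto_subseq hA.le hlam hq
  have hmin := h.Ffun_le_of_tendsto_subseq hA.le hlam hq hφ.tendsto_atTop hlim hgood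
  have hq0 : ∀ k, 0 ≤ q k := fun k => by linarith [hq k]
  have hJ : Tendsto (fun n => Fsmooth A b lam q (eps n) (x n)) atTop (𝓝 (Ffun A b lam q xbar)) :=
    (h.antitone_Fsmooth hA.le hlam hq).tendsto_of_tendsto_comp hφ.tendsto_atTop
      (tendsto_Fsmooth A b lam hq0 ((h.tendsto_eps hA.le hlam hq).comp hφ.tendsto_atTop) hlim)
  exact ⟨xbar, hmin, tendsto_of_tendsto_of_tendsto_of_le_of_le tendsto_const_nhds hJ
    (fun n => hmin (x n)) fun n => Ffun_le_Fsmooth (fun k => (hlam k).le) hq0 (h.eps_pos n).le _⟩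
end

section
/- Let Φ : ℝ^N → ℝ be continuous and attain its minimum, let {y^n} be a sequence in ℝ^N and {g_n} a sequence of reals such that: (i) 0 ≤ Φ(y^n) ≤ g_n for all n; (ii) {g_n} is nonincreasing; (iii) there is a strictly increasing sequence of indices {n_l} with g_{n_l} − Φ(y^{n_l}) → 0 as l → ∞; (iv) there is a further subsequence {y^{n_{l_r}}} converging to some ŷ ∈ ℝ^N that minimizes Φ (Φ(ŷ) ≤ Φ(x) for all x). Then Φ(y^n) → Φ(ŷ) = min Φ as n → ∞; moreover every accumulation point z of {y^n} satisfies Φ(z) = min Φ. -/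
open Filter Topology

/-- abstract convergence argument. If `Φ` is continuous and
attains its minimum, `0 ≤ Φ(yⁿ) ≤ gₙ` with `{gₙ}` nonincreasing,
`g_{n_l} - Φ(y^{n_l}) → 0` along a strictly increasing sequence of indices, and
a further subsequence `y^{n_{l_r}}` converges to a minimizer `ŷ` of `Φ`, then
`Φ(yⁿ) → Φ(ŷ) = min Φ`, and every accumulation point `z` of `{yⁿ}` satisfies
`Φ(z) = Φ(ŷ)`. -/
theorem stmt_17 {N : ℕ} (Φ : (Fin N → ℝ) → ℝ) (hcont : Continuous Φ)
    (hattain : ∃ m : Fin N → ℝ, ∀ x : Fin N → ℝ, Φ m ≤ Φ x)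
    (y : ℕ → Fin N → ℝ) (g : ℕ → ℝ)
    (h1 : ∀ n, 0 ≤ Φ (y n) ∧ Φ (y n) ≤ g n)
    (h2 : ∀ n m : ℕ, n ≤ m → g m ≤ g n)
    (nl : ℕ → ℕ) (hnl : StrictMono nl)
    (h3 : Tendsto (fun l => g (nl l) - Φ (y (nl l))) atTop (nhds 0))
    (r : ℕ → ℕ) (hr : StrictMono r) (yhat : Fin N → ℝ)
    (h4 : Tendsto (fun j => y (nl (r j))) atTop (nhds yhat))
    (h5 : ∀ x : Fin N → ℝ, Φ yhat ≤ Φ x) :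
    Tendsto (fun n => Φ (y n)) atTop (nhds (Φ yhat)) ∧
    ∀ z : Fin N → ℝ,
      (∃ s : ℕ → ℕ, StrictMono s ∧ Tendsto (fun j => y (s j)) atTop (nhds z)) →
        Φ z = Φ yhat := by
  have hanti : Antitone g := fun n m h => h2 n m h
  have hbdd : BddBelow (Set.range g) := by
    refine ⟨Φ yhat, ?_⟩
    rintro _ ⟨n, rfl⟩
    exact le_trans (h5 (y n)) (h1 n).2
  have hgi : Tendsto g atTop (nhds (⨅ n, g n)) := tendsto_atTop_ciInf hanti hbdd
  -- Φ along the subsubsequence tends to Φ yhat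
  have hΦsub : Tendsto (fun j => Φ (y (nl (r j)))) atTop (nhds (Φ yhat)) :=
    (hcont.tendsto yhat).comp h4
  -- g along the subsubsequence tends to Φ yhat
  have h3sub : Tendsto (fun j => g (nl (r j)) - Φ (y (nl (r j)))) atTop (nhds 0) :=
    h3.comp hr.tendsto_atTop
  have hgsub : Tendsto (fun j => g (nl (r j))) atTop (nhds (Φ yhat)) := by
    have := h3sub.add hΦsub
    simpa using this
  have hgsub' : Tendsto (fun j => g (nl (r j))) atTop (nhds (⨅ n, g n)) :=
    hgi.comp ((hnl.comp hr).tendsto_atTop)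
  have heq : (⨅ n, g n) = Φ yhat := tendsto_nhds_unique hgsub' hgsub
  have hg : Tendsto g atTop (nhds (Φ yhat)) := heq ▸ hgi
  have hmain : Tendsto (fun n => Φ (y n)) atTop (nhds (Φ yhat)) :=
    tendsto_of_tendsto_of_tendsto_of_le_of_le tendsto_const_nhds hg
      (fun n => h5 (y n)) (fun n => (h1 n).2)
  refine ⟨hmain, ?_⟩
  rintro z ⟨s, hs, hts⟩
  have h1' : Tendsto (fun j => Φ (y (s j))) atTop (nhds (Φ z)) :=
    (hcont.tendsto z).comp hts
  have h2' : Tendsto (fun j => Φ (y (s j))) atTop (nhds (Φ yhat)) :=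
    hmain.comp hs.tendsto_atTop
  exact tendsto_nhds_unique h1' h2'
end
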